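/- For every integer n ≥ 0 and every P ∈ R = ℂ[x₊,x₋,v,v̄,z,z̄] whose degree in the variable z is at most n+2 and whose degree in the variable z̄ is at most n, the polynomial I⁺ₙP has degree at most n+1 in z and degree at most n+1 in z̄. (In particular, the leading z-degree terms produced by the two parts of I⁺ₙ cancel.) -/

import Mathlib

open MvPolynomial

/-- The ring `R = ℂ[x₊, x₋, v, v̄, z, z̄]`, with variables indexed as
`0 = x₊`, `1 = x₋`, `2 = v`, `3 = v̄`, `4 = z`, `5 = z̄`. -/
abbrev R6 : Type := MvPolynomial (Fin 6) ℂ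

/-- `I₂ = z̄z∂₊ + z∂_v + z̄∂_v̄ + ∂₋`. -/
noncomputable def I2 (P : R6) : R6 :=
  X 5 * X 4 * pderiv 0 P + X 4 * pderiv 2 P + X 5 * pderiv 3 P + pderiv 1 P

/-- `I⁺ₙ = ((n+2)/2)(z̄∂₊ + ∂_v) − ½ I₂∘∂_z`. -/
noncomputable def Iplus (n : ℕ) (P : R6) : R6 :=
  (((n : ℂ) + 2) / 2) • (X 5 * pderiv 0 P + pderiv 2 P)
    - (1 / 2 : ℂ) • I2 (pderiv 4 P)

lemma coeff_pderiv (i : Fin 6) (m : Fin 6 →₀ ℕ) (P : R6) :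
    coeff m (pderiv i P) = ((m i : ℂ) + 1) * coeff (m + Finsupp.single i 1) P := by
  induction P using MvPolynomial.induction_on' with
  | add p q hp hq => simp [hp, hq, mul_add]
  | monomial s a =>
    rw [pderiv_monomial, coeff_monomial, coeff_monomial]
    split_ifs with h1 h2 h2
    · subst h2
      simp [Finsupp.add_apply, mul_comm]
    · by_cases hsi : s i = 0
      · simp [hsi]
      · exact absurd (by rw [← h1, tsub_add_cancel_of_le (Finsupp.single_le_iff.2 (Nat.one_le_iff_ne_zero.2 hsi))]) h2
    · exact absurd (by subst h2; exact add_tsub_cancel_right _ _) h1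
    · ring

lemma mem_support_pderiv {j : Fin 6} {m : Fin 6 →₀ ℕ} {P : R6}
    (h : m ∈ (pderiv j P).support) : m + Finsupp.single j 1 ∈ P.support := by
  rw [MvPolynomial.mem_support_iff] at h ⊢
  intro hc
  exact h (by rw [coeff_pderiv, hc, mul_zero])

lemma degreeOf_pderiv_le (i j : Fin 6) (P : R6) :
    degreeOf i (pderiv j P) ≤ degreeOf i P := by
  rw [degreeOf_le_iff]
  intro m hm
  calc m i ≤ (m + Finsupp.single j 1 : Fin 6 →₀ ℕ) i := by simp [Finsupp.add_apply]
    _ ≤ degreeOf i P := monomial_le_degreeOf i (mem_support_pderiv hm)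

lemma degreeOf_pderiv_self_le (i : Fin 6) (P : R6) (d : ℕ) (h : degreeOf i P ≤ d + 1) :
    degreeOf i (pderiv i P) ≤ d := by
  rw [degreeOf_le_iff]
  intro m hm
  have := monomial_le_degreeOf i (mem_support_pderiv hm)
  simp only [Finsupp.add_apply, Finsupp.single_eq_same] at this
  omega

lemma degreeOf_X_mul_ne (i j : Fin 6) (h : i ≠ j) (P : R6) :
    degreeOf i (X j * P) = degreeOf i P := by
  rw [mul_comm]; exact degreeOf_mul_X_of_ne P h

lemma degreeOf_X_mul_self (i : Fin 6) (P : R6) :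
    degreeOf i (X i * P) ≤ degreeOf i P + 1 := by
  rw [mul_comm]; exact degreeOf_mul_X_self i P

lemma coeff_X_mul_pderiv (i : Fin 6) (m : Fin 6 →₀ ℕ) (P : R6) :
    coeff m (X i * pderiv i P) = (m i : ℂ) * coeff m P := by
  classical
  rw [coeff_X_mul']
  by_cases h4 : i ∈ m.support
  · rw [if_pos h4, coeff_pderiv]
    have h1 : m - Finsupp.single i 1 + Finsupp.single i 1 = m :=
      tsub_add_cancel_of_le (Finsupp.single_le_iff.2
        (Nat.one_le_iff_ne_zero.2 (Finsupp.mem_support_iff.1 h4)))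
    have h2 : (m - Finsupp.single i 1 : Fin 6 →₀ ℕ) i + 1 = m i := by
      have := Finsupp.mem_support_iff.1 h4
      simp only [Finsupp.tsub_apply, Finsupp.single_eq_same]
      omega
    rw [h1, ← h2]
    push_cast
    ring
  · rw [if_neg h4, Finsupp.notMem_support_iff.1 h4]
    simp

lemma key_cancel (n : ℕ) (P : R6) (h : degreeOf 4 P ≤ n + 2) :
    degreeOf 4 ((((n : ℂ) + 2)) • P - X 4 * pderiv 4 P) ≤ n + 1 := by
  rw [degreeOf_le_iff]
  intro m hm
  by_contra hlt
  rw [MvPolynomial.mem_support_iff] at hm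
  apply hm
  rw [coeff_sub, coeff_smul, coeff_X_mul_pderiv]
  by_cases hc : coeff m P = 0
  · simp [hc]
  · have hle : m 4 ≤ n + 2 := degreeOf_le_iff.1 h m (MvPolynomial.mem_support_iff.2 hc)
    have he : m 4 = n + 2 := by omega
    rw [he]
    simp only [smul_eq_mul]
    push_cast
    ring

lemma degreeOf_smul_le' (i : Fin 6) (c : ℂ) (P : R6) :
    degreeOf i (c • P) ≤ degreeOf i P := by
  rw [degreeOf_le_iff]
  intro m hm
  rw [MvPolynomial.mem_support_iff, coeff_smul] at hm
  exact monomial_le_degreeOf i (MvPolynomial.mem_support_iff.2 fun hc => hm (by rw [hc, smul_zero]))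

lemma Iplus_eq (n : ℕ) (P : R6) :
    Iplus n P = (1/2 : ℂ) • (X 5 * pderiv 0 (((n : ℂ) + 2) • P - X 4 * pderiv 4 P)
        + pderiv 2 (((n : ℂ) + 2) • P - X 4 * pderiv 4 P))
      - (1/2 : ℂ) • (X 5 * pderiv 3 (pderiv 4 P) + pderiv 1 (pderiv 4 P)) := by
  simp only [Iplus, I2, smul_eq_C_mul, map_sub, map_mul, pderiv_mul, pderiv_C,
    pderiv_X_of_ne (show (4 : Fin 6) ≠ 0 by decide),
    pderiv_X_of_ne (show (4 : Fin 6) ≠ 2 by decide)]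
  rw [show ((n : ℂ) + 2) / 2 = (1/2) * (n + 2) by ring, C_mul]
  ring

lemma degreeOf_smul_sub (i : Fin 6) (c c' : ℂ) (a b : R6) (d : ℕ)
    (ha : degreeOf i a ≤ d) (hb : degreeOf i b ≤ d) :
    degreeOf i (c • a - c' • b) ≤ d :=
  le_trans (degreeOf_sub_le i _ _)
    (max_le (le_trans (degreeOf_smul_le' i c a) ha) (le_trans (degreeOf_smul_le' i c' b) hb))

/-- If `P` has degree at most `n+2` in `z` and at most `n` in `z̄`, then `I⁺ₙP`
has degree at most `n+1` in both `z` and `z̄`. -/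
theorem Iplus_degree_bound (n : ℕ) (P : R6)
    (hz : degreeOf 4 P ≤ n + 2) (hzbar : degreeOf 5 P ≤ n) :
    degreeOf 4 (Iplus n P) ≤ n + 1 ∧ degreeOf 5 (Iplus n P) ≤ n + 1 := by
  set Q : R6 := ((n : ℂ) + 2) • P - X 4 * pderiv 4 P with hQdef
  have hQ4 : degreeOf 4 Q ≤ n + 1 := key_cancel n P hz
  have hQ5 : degreeOf 5 Q ≤ n := by
    refine le_trans (degreeOf_sub_le 5 _ _) (max_le (le_trans (degreeOf_smul_le' 5 _ _) hzbar) ?_)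
    rw [degreeOf_X_mul_ne 5 4 (by decide)]
    exact le_trans (degreeOf_pderiv_le 5 4 P) hzbar
  have hP4' : degreeOf 4 (pderiv 4 P) ≤ n + 1 := degreeOf_pderiv_self_le 4 P (n + 1) hz
  have hP5' : degreeOf 5 (pderiv 4 P) ≤ n := le_trans (degreeOf_pderiv_le 5 4 P) hzbar
  rw [Iplus_eq, ← hQdef]
  constructor
  · refine degreeOf_smul_sub 4 _ _ _ _ _ (le_trans (degreeOf_add_le 4 _ _) (max_le ?_ ?_))
      (le_trans (degreeOf_add_le 4 _ _) (max_le ?_ ?_))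
    · rw [degreeOf_X_mul_ne 4 5 (by decide)]
      exact le_trans (degreeOf_pderiv_le 4 0 Q) hQ4
    · exact le_trans (degreeOf_pderiv_le 4 2 Q) hQ4
    · rw [degreeOf_X_mul_ne 4 5 (by decide)]
      exact le_trans (degreeOf_pderiv_le 4 3 _) hP4'
    · exact le_trans (degreeOf_pderiv_le 4 1 _) hP4'
  · refine degreeOf_smul_sub 5 _ _ _ _ _ (le_trans (degreeOf_add_le 5 _ _) (max_le ?_ ?_))
      (le_trans (degreeOf_add_le 5 _ _) (max_le ?_ ?_))
    · exact le_trans (degreeOf_X_mul_self 5 _)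
        (by have := le_trans (degreeOf_pderiv_le 5 0 Q) hQ5; omega)
    · exact le_trans (le_trans (degreeOf_pderiv_le 5 2 Q) hQ5) (Nat.le_succ n)
    · exact le_trans (degreeOf_X_mul_self 5 _)
        (by have := le_trans (degreeOf_pderiv_le 5 3 _) hP5'; omega)
    · exact le_trans (le_trans (degreeOf_pderiv_le 5 1 _) hP5') (Nat.le_succ n)
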